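/- For every x ∈ ℝ, x + φ(x)/Φ(x) > 0, where φ and Φ are the standard normal density and cumulative distribution function. -/

import Mathlib

open MeasureTheory

/-- Standard normal density `φ`. -/
noncomputable def stdNormalPDF (x : ℝ) : ℝ :=
  (Real.sqrt (2 * Real.pi))⁻¹ * Real.exp (-(x ^ 2) / 2)

/-- Standard normal CDF `Φ`. -/
noncomputable def stdNormalCDF (x : ℝ) : ℝ := ∫ t in Set.Iic x, stdNormalPDF t

/-!
Since `φ' = -t φ`, we have `∫_{-∞}^x t φ(t) dt = -φ(x)`, hence
`x Φ(x) + φ(x) = ∫_{-∞}^x (x - t) φ(t) dt`, the integral of a function that is positive on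
`(-∞, x)`. Dividing by `Φ(x) > 0` gives the claim.
-/

open Real Set Filter

lemma setIntegral_Iic_sub_mul_pos {f : ℝ → ℝ} {x : ℝ} (hf : ∀ t, 0 < f t)
    (hint : IntegrableOn (fun t => (x - t) * f t) (Iic x)) :
    0 < ∫ t in Iic x, (x - t) * f t := by
  rw [setIntegral_pos_iff_support_of_nonneg_ae _ hint]
  · have hsupp : Iio x ⊆ Function.support (fun t => (x - t) * f t) ∩ Iic x := fun t ht =>
      ⟨mul_ne_zero (sub_ne_zero.mpr (ne_of_lt ht).symm) (hf t).ne', Iio_subset_Iic_self ht⟩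
    exact (by simp : (0 : ENNReal) < volume (Iio x)).trans_le (measure_mono hsupp)
  · rw [EventuallyLE, ae_restrict_iff' measurableSet_Iic]
    exact ae_of_all _ fun t ht => mul_nonneg (sub_nonneg.mpr ht) (hf t).le

lemma stdNormalPDF_eq_gaussianPDFReal : stdNormalPDF = ProbabilityTheory.gaussianPDFReal 0 1 := by
  ext x
  simp [stdNormalPDF, ProbabilityTheory.gaussianPDFReal]

lemma stdNormalPDF_pos (x : ℝ) : 0 < stdNormalPDF x := by
  unfold stdNormalPDF
  positivity

lemma integrable_stdNormalPDF : Integrable stdNormalPDF := by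
  rw [stdNormalPDF_eq_gaussianPDFReal]
  exact ProbabilityTheory.integrable_gaussianPDFReal 0 1

lemma integrable_mul_stdNormalPDF : Integrable (fun t => t * stdNormalPDF t) := by
  refine ((integrable_mul_exp_neg_mul_sq (b := 1 / 2) (by norm_num)).const_mul
    (√(2 * π))⁻¹).congr (ae_of_all _ fun t => ?_)
  simp only [stdNormalPDF]
  ring_nf

lemma hasDerivAt_stdNormalPDF (t : ℝ) : HasDerivAt stdNormalPDF (-t * stdNormalPDF t) t := by
  have hexp : HasDerivAt (fun y : ℝ => -(y ^ 2) / 2) (-t) t :=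
    ((hasDerivAt_pow 2 t).neg.div_const 2).congr_deriv (by ring)
  refine (hexp.exp.const_mul (√(2 * π))⁻¹).congr_deriv ?_
  simp only [stdNormalPDF]
  ring

lemma setIntegral_Iic_mul_stdNormalPDF (x : ℝ) :
    ∫ t in Iic x, t * stdNormalPDF t = -stdNormalPDF x := by
  have hderiv : ∀ t ∈ Iic x, HasDerivAt stdNormalPDF (-t * stdNormalPDF t) t :=
    fun t _ => hasDerivAt_stdNormalPDF t
  have hint : IntegrableOn (fun t => -t * stdNormalPDF t) (Iic x) := by
    simpa only [neg_mul, Pi.neg_def] using integrable_mul_stdNormalPDF.neg.integrableOn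
  have hlim := tendsto_zero_of_hasDerivAt_of_integrableOn_Iic hderiv hint
    integrable_stdNormalPDF.integrableOn
  have hftc := integral_Iic_of_hasDerivAt_of_tendsto' hderiv hint hlim
  simp only [neg_mul, integral_neg, sub_zero] at hftc
  linarith

lemma stdNormalCDF_pos (x : ℝ) : 0 < stdNormalCDF x := by
  rw [stdNormalCDF, setIntegral_pos_iff_support_of_nonneg_ae
    (ae_of_all _ fun t => (stdNormalPDF_pos t).le) integrable_stdNormalPDF.integrableOn,
    Function.support_eq_univ fun t => (stdNormalPDF_pos t).ne', univ_inter]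
  simp

lemma mul_stdNormalCDF_add_stdNormalPDF (x : ℝ) :
    x * stdNormalCDF x + stdNormalPDF x = ∫ t in Iic x, (x - t) * stdNormalPDF t := by
  simp only [sub_mul]
  rw [integral_sub (integrable_stdNormalPDF.const_mul x).integrableOn
    integrable_mul_stdNormalPDF.integrableOn, integral_const_mul,
    setIntegral_Iic_mul_stdNormalPDF, stdNormalCDF]
  ring

/-- Gordon's Mill's-ratio inequality: `x + φ(x)/Φ(x) > 0` for all `x ∈ ℝ`. -/
theorem stmt_6 (x : ℝ) : 0 < x + stdNormalPDF x / stdNormalCDF x := by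
  have hΦ := stdNormalCDF_pos x
  have hint : IntegrableOn (fun t => (x - t) * stdNormalPDF t) (Iic x) := by
    simpa only [sub_mul] using
      ((integrable_stdNormalPDF.const_mul x).sub' integrable_mul_stdNormalPDF).integrableOn
  have hnum : 0 < x * stdNormalCDF x + stdNormalPDF x := by
    rw [mul_stdNormalCDF_add_stdNormalPDF]
    exact setIntegral_Iic_sub_mul_pos stdNormalPDF_pos hint
  calc 0 < (x * stdNormalCDF x + stdNormalPDF x) / stdNormalCDF x := div_pos hnum hΦ
    _ = x + stdNormalPDF x / stdNormalCDF x := by field_simp
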